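/- (Kruskal's theorem, labelled version) If (Q, ≤) is a well quasi-order, then the set T(Q) of finite ordered trees with labels in Q is a well quasi-order under the tree-embeddability relation ⪯. -/

import Mathlib

universe u

/-- Finite ordered trees with labels in `Q`. -/
inductive LTree (Q : Type u) : Type u
  | node : Q → List (LTree Q) → LTree Q

mutual
  /-- Tree embeddability: `Emb r t s` iff `t` embeds into a subtree of `s`, or the
  roots compare via `r` and the lists of immediate subtrees compare in Higman's
  order induced by embeddability. -/
  inductive Emb {Q : Type u} (r : Q → Q → Prop) : LTree Q → LTree Q → Prop
    | subtree {t s : LTree Q} {q : Q} {ss : List (LTree Q)} :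
        Emb r t s → s ∈ ss → Emb r t (.node q ss)
    | node {p q : Q} {ts ss : List (LTree Q)} :
        r p q → ListEmb r ts ss → Emb r (.node p ts) (.node q ss)

  /-- Higman's embedding between lists of trees, with `Emb r` on the elements. -/
  inductive ListEmb {Q : Type u} (r : Q → Q → Prop) : List (LTree Q) → List (LTree Q) → Prop
    | nil : ListEmb r [] []
    | cons {t s : LTree Q} {ts ss : List (LTree Q)} :
        Emb r t s → ListEmb r ts ss → ListEmb r (t :: ts) (s :: ss)
    | skip {s : LTree Q} {ts ss : List (LTree Q)} :
        ListEmb r ts ss → ListEmb r ts (s :: ss)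
end

def IsWqo {α : Type*} (r : α → α → Prop) : Prop :=
  ∀ f : ℕ → α, ∃ i j : ℕ, i < j ∧ r (f i) (f j)

/-! Nash-Williams' minimal bad sequence argument. Take a bad sequence `f` of trees that is
minimal, position by position, with respect to size. The children of all the `f n` then form a
wqo set: a bad sequence of children could be spliced into `f` to produce a smaller bad sequence.
By Higman's lemma the lists of children are wqo as well, so along a subsequence on which the root
labels increase, two trees have comparable children lists, and hence embed by `Emb.node`. -/

namespace LTree

variable {Q : Type u}

def root : LTree Q → Q
  | node q _ => q

def children : LTree Q → List (LTree Q)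
  | node _ ts => ts

theorem eq_node_root_children : ∀ t : LTree Q, t = node t.root t.children
  | node _ _ => rfl

theorem sizeOf_lt_of_mem_children {t u : LTree Q} (hu : u ∈ t.children) :
    sizeOf u < sizeOf t := by
  obtain ⟨q, ts⟩ := t
  have := List.sizeOf_lt_of_mem hu
  simp only [children] at this
  simp only [node.sizeOf_spec]
  omega

end LTree

open LTree

section Embedding

variable {Q : Type u} {r : Q → Q → Prop}

theorem ListEmb.nil_left : ∀ ss : List (LTree Q), ListEmb r [] ss
  | [] => .nil
  | _ :: ss => .skip (nil_left ss)

theorem ListEmb.of_sublistForall₂ {ts ss : List (LTree Q)}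
    (h : List.SublistForall₂ (Emb r) ts ss) : ListEmb r ts ss := by
  induction h with
  | nil => exact nil_left _
  | cons hts _ ih => exact .cons hts ih
  | cons_right _ ih => exact .skip ih

theorem ListEmb.exists_emb_of_mem {ts ss : List (LTree Q)} (h : ListEmb r ts ss) {t : LTree Q}
    (ht : t ∈ ts) : ∃ s ∈ ss, Emb r t s := by
  induction ss generalizing ts with
  | nil => cases h; cases ht
  | cons s ss ih =>
    cases h with
    | cons hts h =>
      rcases List.mem_cons.1 ht with rfl | ht
      · exact ⟨s, List.mem_cons_self, hts⟩
      · obtain ⟨s', hs', h'⟩ := ih h ht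
        exact ⟨s', List.mem_cons_of_mem _ hs', h'⟩
    | skip h =>
      obtain ⟨s', hs', h'⟩ := ih h ht
      exact ⟨s', List.mem_cons_of_mem _ hs', h'⟩

theorem Emb.of_mem_children {x u t : LTree Q} (hx : Emb r x u) (hu : u ∈ t.children) :
    Emb r x t := by
  rw [eq_node_root_children t]
  exact .subtree hx hu

theorem Emb.of_root_of_sublistForall₂ {t s : LTree Q} (hroot : r t.root s.root)
    (hchildren : List.SublistForall₂ (Emb r) t.children s.children) : Emb r t s := by
  rw [eq_node_root_children t, eq_node_root_children s]
  exact .node hroot (.of_sublistForall₂ hchildren)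

mutual

theorem Emb.refl [Std.Refl r] : ∀ t : LTree Q, Emb r t t
  | node q ts => .node (refl_of r q) (ListEmb.refl ts)

theorem ListEmb.refl [Std.Refl r] : ∀ ts : List (LTree Q), ListEmb r ts ts
  | [] => .nil
  | t :: ts => .cons (Emb.refl t) (ListEmb.refl ts)

end

mutual

theorem Emb.trans [IsTrans Q r] {t s : LTree Q} :
    ∀ {u : LTree Q}, Emb r t s → Emb r s u → Emb r t u
  | node _ _, hts, .subtree hsu hu => .subtree (Emb.trans hts hsu) hu
  | node _ _, .subtree hts hs, .node _ hsu =>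
    have ⟨_, hu, hsu'⟩ := hsu.exists_emb_of_mem hs
    .subtree (Emb.trans hts hsu') hu
  | node _ _, .node hpq hts, .node hqr hsu => .node (trans_of r hpq hqr) (ListEmb.trans hts hsu)
  termination_by u => sizeOf u

theorem ListEmb.trans [IsTrans Q r] {ts ss : List (LTree Q)} :
    ∀ {us : List (LTree Q)}, ListEmb r ts ss → ListEmb r ss us → ListEmb r ts us
  | [], .nil, .nil => .nil
  | _ :: _, .cons hts h, .cons hsu h' => .cons (Emb.trans hts hsu) (ListEmb.trans h h')
  | _ :: _, .skip h, .cons _ h' => .skip (ListEmb.trans h h')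
  | _ :: _, h, .skip h' => .skip (ListEmb.trans h h')
  termination_by us => sizeOf us

end

instance [IsPreorder Q r] : IsPreorder (LTree Q) (Emb r) where
  refl := Emb.refl
  trans _ _ _ := Emb.trans

end Embedding

namespace Set.PartiallyWellOrderedOn

theorem IsBadSeq.splice {α : Type*} {rel : α → α → Prop} {s : Set α} {f g : ℕ → α} {N : ℕ}
    (hf : IsBadSeq rel s f) (hg : IsBadSeq rel s g) (hfg : ∀ i < N, ∀ k, ¬rel (f i) (g k)) :
    IsBadSeq rel s (fun i => if i < N then f i else g (i - N)) := by
  refine ⟨fun i => by dsimp only; split_ifs; exacts [hf.1 i, hg.1 _], fun i j hij => ?_⟩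
  dsimp only
  split_ifs with hi hj hj
  · exact hf.2 i j hij
  · exact hfg i hi _
  · omega
  · exact hg.2 _ _ (by omega)

end Set.PartiallyWellOrderedOn

open Set.PartiallyWellOrderedOn in
theorem partiallyWellOrderedOn_children_of_isMinBadSeq {Q : Type u} {r : Q → Q → Prop}
    {f : ℕ → LTree Q} (hf : IsBadSeq (Emb r) Set.univ f)
    (hmin : ∀ n, IsMinBadSeq (Emb r) (fun t => sizeOf t) Set.univ n f) :
    {t | ∃ n, t ∈ (f n).children}.PartiallyWellOrderedOn (Emb r) := by
  rw [iff_forall_not_isBadSeq]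
  intro g hg
  choose idx hidx using hg.1
  set k₀ := Function.argmin idx
  set N := idx k₀
  have hg' : IsBadSeq (Emb r) Set.univ (fun k => g (k₀ + k)) :=
    ⟨fun _ => trivial, fun i j hij => hg.2 _ _ (by omega)⟩
  have hfg : ∀ i < N, ∀ k, ¬Emb r (f i) (g (k₀ + k)) := fun i hi k hemb =>
    hf.2 i _ (hi.trans_le (Function.argmin_le idx _)) (hemb.of_mem_children (hidx _))
  refine hmin N _ (fun i hi => (if_pos hi).symm) ?_ (hf.splice hg' hfg)
  simpa using sizeOf_lt_of_mem_children (hidx k₀)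

/-- Kruskal's theorem, labelled version: if (Q, ≤) is a wqo, then the
finite ordered trees with labels in Q form a wqo under tree embeddability. -/
theorem kruskal_labelled {Q : Type u} (r : Q → Q → Prop)
    (hrefl : Reflexive r) (htrans : Transitive r)
    (hwqo : IsWqo r) :
    IsWqo (Emb r) := by
  have : IsPreorder Q r := { refl := hrefl, trans := @htrans }
  change WellQuasiOrdered (Emb r)
  rw [← Set.partiallyWellOrderedOn_univ_iff,
    Set.PartiallyWellOrderedOn.iff_not_exists_isMinBadSeq (fun t : LTree Q => sizeOf t)]
  rintro ⟨f, hf, hmin⟩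
  have hchildren := (partiallyWellOrderedOn_children_of_isMinBadSeq hf hmin)
    |>.partiallyWellOrderedOn_sublistForall₂ (Emb r)
  obtain ⟨φ, hroots⟩ := WellQuasiOrdered.exists_monotone_subseq hwqo (fun n => (f n).root)
  obtain ⟨m, n, hmn, hsub⟩ := hchildren.exists_lt (f := fun k => (f (φ k)).children)
    fun k _ hx => ⟨φ k, hx⟩
  exact hf.2 (φ m) (φ n) (φ.strictMono hmn) (.of_root_of_sublistForall₂ (hroots m n hmn.le) hsub)
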